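/- arXiv:0809.3742 — 2 statements merged into one kernel-verified Lean document; each statement's English description precedes it below -/
import Mathlib

section
/- For non-negative integers α, β, define ⟨α|β⟩ = [D_x^{(α,β)} x^β]_0, the degree-zero coefficient of D_x^{(α,β)} x^β, where D_x^{(α,β)} is the sum of all words of length β in the letters ∂_x and 1/x with exactly α letters equal to 1/x, acting on Laurent series in x. Then for β > 0 the recursion ⟨α|β⟩ = β·⟨α|β−1⟩ + ⟨α−1|β−1⟩ holds, with the convention ⟨α|β⟩ = 0 when α < 0 or α > β. -/
/-- The scalar produced by applying a word of operators to the monomial `x^e` in formal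
Laurent series: the letter `true` stands for multiplication by `1/x` and `false` stands for
`∂_x`; the head of the list acts first.  Each letter lowers the exponent by one, and `∂_x`
contributes the current exponent as a multiplicative factor, so the resulting monomial is
`wordVal w e • x^(e - length w)`. -/
def wordVal : List Bool → ℤ → ℤ
  | [], _ => 1
  | b :: w, e => (if b then 1 else e) * wordVal w (e - 1)

/-- `bra α β = ⟨α|β⟩` : the degree-zero coefficient of `D_x^{(α,β)} x^β`, where
`D_x^{(α,β)}` is the sum of all words of length `β` in the letters `∂_x` and `1/x`
with exactly `α` of the letters equal to `1/x`.  Each such word applied to `x^β`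
yields a constant, namely `wordVal` of the word at exponent `β`. -/
def bra (α : ℤ) (β : ℕ) : ℤ :=
  ∑ w ∈ Finset.univ.filter
      (fun w : Fin β → Bool => ((List.ofFn w).count true : ℤ) = α),
    wordVal (List.ofFn w) (β : ℤ)

lemma bra_succ (α : ℤ) (n : ℕ) :
    bra α (n+1) = ((n:ℤ)+1) * bra α n + bra (α-1) n := by
  unfold bra
  rw [Finset.sum_filter, Finset.sum_filter, Finset.sum_filter]
  have key := Fintype.sum_equiv (Fin.consEquiv (fun _ : Fin (n+1) => Bool))
      (fun p : Bool × (Fin n → Bool) =>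
        if ((List.ofFn (Fin.cons p.1 p.2 : Fin (n+1) → Bool)).count true : ℤ) = α then
          wordVal (List.ofFn (Fin.cons p.1 p.2 : Fin (n+1) → Bool)) ((n+1 : ℕ) : ℤ) else 0)
      (fun w : Fin (n+1) → Bool =>
        if ((List.ofFn w).count true : ℤ) = α then wordVal (List.ofFn w) ((n+1 : ℕ) : ℤ)
          else 0)
      (fun p => rfl)
  rw [← key, Fintype.sum_prod_type, Fintype.sum_bool]
  simp only [List.ofFn_cons, List.count_cons, wordVal]
  push_cast
  norm_num
  rw [Finset.mul_sum]
  simp_rw [mul_ite, mul_zero]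
  have h1 : ∀ w : Fin n → Bool,
      (if ((List.ofFn w).count true : ℤ) + 1 = α then wordVal (List.ofFn w) (n:ℤ) else 0)
      = (if ((List.ofFn w).count true : ℤ) = α - 1 then wordVal (List.ofFn w) (n:ℤ) else 0) := by
    intro w; congr 1; simp only [eq_iff_iff]; omega
  simp_rw [h1]
  ring

/-- For `β > 0` the recursion `⟨α|β⟩ = β⟨α|β-1⟩ + ⟨α-1|β-1⟩` holds, with the
convention that `⟨α|β⟩ = 0` when `α < 0` or `α > β`. -/
theorem stmt0 :
    (∀ (α : ℤ) (β : ℕ), 0 < β →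
      bra α β = (β : ℤ) * bra α (β - 1) + bra (α - 1) (β - 1)) ∧
    (∀ (α : ℤ) (β : ℕ), α < 0 ∨ (β : ℤ) < α → bra α β = 0) := by
  constructor
  · rintro α β hβ
    obtain ⟨n, rfl⟩ := Nat.exists_eq_add_of_lt hβ
    simp only [Nat.add_sub_cancel, zero_add]
    rw [bra_succ]; push_cast; ring
  · rintro α β h
    unfold bra
    rw [Finset.filter_eq_empty_iff.mpr, Finset.sum_empty]
    intro w _ hc
    have : (List.ofFn w).count true ≤ β := by
      simpa using (List.count_le_length : (List.ofFn w).count true ≤ (List.ofFn w).length)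
    omega
end

section
/- Define constants a^i_j for 0 ≤ j ≤ i by the recursion coming from T γ_s = (s+1)γ_s − γ_{s+1}: if δ^i ω = Σ_{j≤i} a^i_j ω_j where ω_s correspond to γ_s = (−π)^s ω_s and δ = −T, then a^i_j = (−1)^{i+j} π^j Σ_{α+β=j} (−1)^α (α+1)^i / (α! β!). Equivalently, purely algebraically: in the free module over ℚ[π] with basis (ω_s)_{s≥0}, define the operator δ by δ ω_s = −(s+1) ω_s − π ω_{s+1}; then δ^i ω_0 = Σ_{j=0}^{i} a^i_j ω_j with a^i_j = (−1)^{i+j} π^j Σ_{α+β=j, α,β≥0} (−1)^α (α+1)^i/(α!β!). -/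
/-!
Up to sign, the coefficients are Stirling numbers of the second kind:
`a^i_j = (-1)^i π^j S(i+1, j+1)`. Indeed `δ` acts on coefficient sequences by
`(δ f)_{j+1} = -(j+2) f_{j+1} - π f_j`, which turns into the recursion
`S(n+1, k+1) = (k+1) S(n, k+1) + S(n, k)`, and the alternating sum in the statement is the
classical explicit formula `S(n+1, k+1) = Σ_α (-1)^(k-α) (α+1)^n / (α! (k-α)!)`.
-/

open Finset Polynomial
open scoped Nat

/-- The operator `δ` on the free `ℚ[π]`-module with basis `(ω_s)_{s ≥ 0}`
(realized as `ℕ →₀ ℚ[X]`, with `π = X` and `ω_s = single s 1`), defined by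
`δ ω_s = -(s+1) ω_s - π ω_{s+1}`. -/
noncomputable def δop : (ℕ →₀ Polynomial ℚ) →ₗ[Polynomial ℚ] (ℕ →₀ Polynomial ℚ) :=
  Finsupp.lsum ℚ fun s : ℕ =>
    LinearMap.toSpanSingleton (Polynomial ℚ) (ℕ →₀ Polynomial ℚ)
      (Finsupp.single s (-((s : Polynomial ℚ) + 1)) + Finsupp.single (s + 1) (-Polynomial.X))

def stirlingSum (n k : ℕ) : ℚ :=
  ∑ α ∈ range (k + 1), (-1 : ℚ) ^ α * ((α : ℚ) + 1) ^ n / ((α ! : ℚ) * ((k - α)! : ℚ))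

lemma stirlingSum_zero_right (n : ℕ) : stirlingSum n 0 = 1 := by
  simp [stirlingSum]

lemma stirlingSum_zero_succ (k : ℕ) : stirlingSum 0 (k + 1) = 0 := by
  have hterm : ∀ α ∈ range (k + 2),
      (-1 : ℚ) ^ α * ((α : ℚ) + 1) ^ 0 / ((α ! : ℚ) * ((k + 1 - α)! : ℚ)) =
        (-1 : ℚ) ^ α * ((k + 1).choose α : ℚ) / ((k + 1)! : ℚ) := by
    intro α hα
    rw [Nat.cast_choose ℚ (Nat.lt_succ_iff.mp (mem_range.mp hα))]
    field_simp
  have halt : ∑ α ∈ range (k + 2), (-1 : ℚ) ^ α * ((k + 1).choose α : ℚ) = 0 := by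
    exact_mod_cast Int.alternating_sum_range_choose_of_ne (n := k + 1) (Nat.succ_ne_zero k)
  rw [stirlingSum, sum_congr rfl hterm, ← sum_div, halt, zero_div]

lemma add_one_div_factorial_mul_factorial {α k : ℕ} (h : α ≤ k) :
    ((α : ℚ) + 1) / ((α ! : ℚ) * ((k + 1 - α)! : ℚ)) =
      ((k : ℚ) + 2) / ((α ! : ℚ) * ((k + 1 - α)! : ℚ)) - 1 / ((α ! : ℚ) * ((k - α)! : ℚ)) := by
  obtain ⟨m, rfl⟩ := Nat.exists_eq_add_of_le h
  rw [show α + m + 1 - α = m + 1 by omega, show α + m - α = m by omega, Nat.factorial_succ]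
  push_cast
  field_simp
  ring

lemma stirlingSum_succ_succ (n k : ℕ) :
    stirlingSum (n + 1) (k + 1) = ((k : ℚ) + 2) * stirlingSum n (k + 1) - stirlingSum n k := by
  have hterm : ∀ α ∈ range (k + 1),
      (-1 : ℚ) ^ α * ((α : ℚ) + 1) ^ (n + 1) / ((α ! : ℚ) * ((k + 1 - α)! : ℚ)) =
        ((k : ℚ) + 2) * ((-1 : ℚ) ^ α * ((α : ℚ) + 1) ^ n / ((α ! : ℚ) * ((k + 1 - α)! : ℚ)))
          - (-1 : ℚ) ^ α * ((α : ℚ) + 1) ^ n / ((α ! : ℚ) * ((k - α)! : ℚ)) := by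
    intro α hα
    have h := add_one_div_factorial_mul_factorial (Nat.lt_succ_iff.mp (mem_range.mp hα))
    calc _ = (-1 : ℚ) ^ α * ((α : ℚ) + 1) ^ n *
          (((α : ℚ) + 1) / ((α ! : ℚ) * ((k + 1 - α)! : ℚ))) := by ring
      _ = _ := by rw [h]; ring
  rw [stirlingSum, sum_range_succ, sum_congr rfl hterm, sum_sub_distrib, ← mul_sum, stirlingSum,
    stirlingSum, sum_range_succ _ (k + 1), Nat.sub_self]
  push_cast
  ring

lemma stirlingSum_eq_stirlingSecond (n k : ℕ) :
    stirlingSum n k = (-1) ^ k * (Nat.stirlingSecond (n + 1) (k + 1) : ℚ) := by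
  induction n generalizing k with
  | zero =>
    cases k with
    | zero => simp [stirlingSum_zero_right, Nat.stirlingSecond_self]
    | succ k => simp [stirlingSum_zero_succ, Nat.stirlingSecond_eq_zero_of_lt]
  | succ n ih =>
    cases k with
    | zero => simp [stirlingSum_zero_right, Nat.stirlingSecond_one_right]
    | succ k =>
      rw [stirlingSum_succ_succ, ih, ih, Nat.stirlingSecond_succ_succ (n + 1) (k + 1)]
      push_cast
      ring

lemma δop_single (j : ℕ) (c : ℚ[X]) :
    δop (Finsupp.single j c) =
      Finsupp.single j (c * -((j : ℚ[X]) + 1)) + Finsupp.single (j + 1) (c * -X) := by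
  rw [δop, Finsupp.lsum_single, LinearMap.toSpanSingleton_apply, smul_add,
    Finsupp.smul_single, Finsupp.smul_single, smul_eq_mul, smul_eq_mul]

lemma δop_apply_zero (f : ℕ →₀ ℚ[X]) : δop f 0 = -f 0 := by
  induction f using Finsupp.induction_linear with
  | zero => simp
  | add f g hf hg => rw [map_add, Finsupp.add_apply, hf, hg, Finsupp.add_apply, neg_add]
  | single s c => cases s <;> simp [δop_single]

lemma δop_apply_succ (f : ℕ →₀ ℚ[X]) (k : ℕ) :
    δop f (k + 1) = -((k : ℚ[X]) + 2) * f (k + 1) - X * f k := by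
  induction f using Finsupp.induction_linear with
  | zero => simp
  | add f g hf hg => simp only [map_add, Finsupp.add_apply, hf, hg]; ring
  | single s c =>
    simp only [δop_single, Finsupp.add_apply, Finsupp.single_apply, add_left_inj]
    split_ifs <;> first | omega | (subst_vars; push_cast; ring)

lemma δop_pow_single_zero_apply (i j : ℕ) :
    (δop ^ i) (Finsupp.single 0 1) j =
      (-1) ^ i * X ^ j * (Nat.stirlingSecond (i + 1) (j + 1) : ℚ[X]) := by
  induction i generalizing j with
  | zero =>
    cases j with
    | zero => simp [Nat.stirlingSecond_self]
    | succ j => simp [Nat.stirlingSecond_eq_zero_of_lt]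
  | succ i ih =>
    rw [pow_succ', Module.End.mul_apply]
    cases j with
    | zero => simp [δop_apply_zero, ih, Nat.stirlingSecond_one_right, pow_succ]
    | succ j =>
      rw [δop_apply_succ, ih, ih, Nat.stirlingSecond_succ_succ (i + 1) (j + 1)]
      push_cast
      ring

/-- `δ^i ω_0 = Σ_{j=0}^i a^i_j ω_j` with
`a^i_j = (-1)^{i+j} π^j Σ_{α+β=j} (-1)^α (α+1)^i / (α! β!)`. -/
theorem stmt6 (i : ℕ) :
    (δop ^ i) (Finsupp.single 0 1) =
      ∑ j ∈ Finset.range (i + 1),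
        Finsupp.single j
          ((-1 : Polynomial ℚ) ^ (i + j) * Polynomial.X ^ j *
            Polynomial.C (∑ α ∈ Finset.range (j + 1),
              (-1 : ℚ) ^ α * ((α : ℚ) + 1) ^ i /
                ((α.factorial : ℚ) * ((j - α).factorial : ℚ)))) := by
  simp only [← stirlingSum.eq_1, stirlingSum_eq_stirlingSecond]
  ext j : 1
  simp only [δop_pow_single_zero_apply, Finsupp.finsetSum_apply, Finsupp.single_apply,
    sum_ite_eq', mem_range]
  split_ifs with hj
  · have hsign : ((-1 : ℚ[X]) ^ j) ^ 2 = 1 := by rw [← pow_mul, pow_mul', neg_one_sq, one_pow]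
    rw [map_mul, map_pow, map_neg, map_one, map_natCast]
    linear_combination
      (-(-1 : ℚ[X]) ^ i * X ^ j * (Nat.stirlingSecond (i + 1) (j + 1) : ℚ[X])) * hsign
  · simp [Nat.stirlingSecond_eq_zero_of_lt (by omega : i + 1 < j + 1)]
end
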